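/- Let n be a nonempty finite type, let ρ and σ be positive definite matrices of trace 1 on Matrix n n ℂ, and let s : ℝ with s > 0 be such that σ − s • 1 is positive semidefinite. Then D(ρ‖σ) ≤ −Real.log s. -/

import Mathlib

open Matrix
open scoped ComplexOrder

/-- matrix logarithm via the continuous functional calculus -/
noncomputable def mlog {n : Type*} [Fintype n] [DecidableEq n] (A : Matrix n n ℂ) :
    Matrix n n ℂ := cfc Real.log A

/-- quantum relative entropy `D(ρ‖σ) = Re Tr[ρ (log ρ − log σ)]` -/
noncomputable def relEnt {n : Type*} [Fintype n] [DecidableEq n]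
    (ρ σ : Matrix n n ℂ) : ℝ := (Matrix.trace (ρ * (mlog ρ - mlog σ))).re

/-!
Since `ρ ≥ 0` has trace one, `ρ ≤ 1`, hence `log ρ ≤ 0`; operator monotonicity of the logarithm
turns `σ ≥ s` into `log σ ≥ log s`. So `log ρ - log σ ≤ -log s`, and since `X ↦ Re Tr (ρ X)` is
monotone for `ρ ≥ 0`, this gives `D(ρ‖σ) ≤ -log s · Tr ρ = -log s`.
-/

-- The operator norm makes matrices a C⋆-algebra, so the results on `CFC.log` (of which `mlog` is
-- an unfolding) apply.
open scoped MatrixOrder Matrix.Norms.L2Operator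

namespace CFC

variable {A : Type*} [CStarAlgebra A] [PartialOrder A] [StarOrderedRing A]

lemma log_nonpos {a : A} (ha₁ : a ≤ 1) (ha : IsStrictlyPositive a := by cfc_tac) : log a ≤ 0 := by
  simpa using log_le_log ha₁

lemma algebraMap_log_le_log {a : A} {r : ℝ} (hr : 0 < r) (h : algebraMap ℝ A r ≤ a) :
    algebraMap ℝ A (Real.log r) ≤ log a := by
  rw [← log_algebraMap]
  exact log_le_log h (isStrictlyPositive_algebraMap hr)

end CFC

namespace Matrix.PosSemidef

variable {𝕜 n : Type*} [RCLike 𝕜] [Fintype n] {A : Matrix n n 𝕜}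

lemma trace_mul_nonneg {B : Matrix n n 𝕜} (hA : A.PosSemidef) (hB : B.PosSemidef) :
    0 ≤ (A * B).trace := by
  classical
  obtain ⟨C, rfl⟩ := CStarAlgebra.nonneg_iff_eq_star_mul_self.mp hB.nonneg
  rw [← mul_assoc, trace_mul_cycle, star_eq_conjTranspose]
  exact (hA.mul_mul_conjTranspose_same C).trace_nonneg

lemma re_trace_mul_le_re_trace_mul (hA : A.PosSemidef) {X Y : Matrix n n 𝕜} (h : X ≤ Y) :
    RCLike.re (A * X).trace ≤ RCLike.re (A * Y).trace := by
  have := (RCLike.nonneg_iff.mp (hA.trace_mul_nonneg h)).1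
  rwa [mul_sub, trace_sub, map_sub, sub_nonneg] at this

lemma le_algebraMap_re_trace [DecidableEq n] (hA : A.PosSemidef) :
    A ≤ algebraMap ℝ (Matrix n n 𝕜) (RCLike.re A.trace) := by
  rw [le_algebraMap_iff_spectrum_le hA.isHermitian,
    hA.isHermitian.spectrum_real_eq_range_eigenvalues]
  rintro _ ⟨i, rfl⟩
  rw [hA.isHermitian.trace_eq_sum_eigenvalues, map_sum]
  simp only [RCLike.ofReal_re]
  exact Finset.single_le_sum (fun j _ => hA.eigenvalues_nonneg j) (Finset.mem_univ i)

end Matrix.PosSemidef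

theorem relEnt_le_neg_log_smallest_eigenvalue_general
    {n : Type*} [Fintype n] [DecidableEq n]
    (ρ σ : Matrix n n ℂ) (hρ : ρ.PosDef) (hρtr : Matrix.trace ρ = 1)
    (s : ℝ) (hs : 0 < s) (hbound : (σ - s • (1 : Matrix n n ℂ)).PosSemidef) :
    relEnt ρ σ ≤ -Real.log s := by
  have hρ_le_one : ρ ≤ 1 := by
    simpa [hρtr] using hρ.posSemidef.le_algebraMap_re_trace
  have hlogρ : mlog ρ ≤ 0 := CFC.log_nonpos hρ_le_one hρ.isStrictlyPositive
  have hlogσ : algebraMap ℝ _ (Real.log s) ≤ mlog σ :=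
    CFC.algebraMap_log_le_log hs (by rwa [Algebra.algebraMap_eq_smul_one, Matrix.le_iff])
  calc relEnt ρ σ = RCLike.re (ρ * (mlog ρ - mlog σ)).trace := rfl
    _ ≤ RCLike.re (ρ * algebraMap ℝ _ (-Real.log s)).trace := by
      refine hρ.posSemidef.re_trace_mul_le_re_trace_mul ?_
      simpa using sub_le_sub hlogρ hlogσ
    _ = -Real.log s := by simp [Algebra.algebraMap_eq_smul_one, hρtr]

/-- **Key estimate of Theorem 5.5.** If `σ ≥ s • 1` with `s > 0`, then
`D(ρ‖σ) ≤ −log s` (i.e. `D(ρ‖σ) ≤ log(1/σ_min)`). -/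
theorem relEnt_le_neg_log_smallest_eigenvalue
    {n : Type*} [Fintype n] [DecidableEq n] [Nonempty n]
    (ρ σ : Matrix n n ℂ) (hρ : ρ.PosDef) (hρtr : Matrix.trace ρ = 1)
    (hσ : σ.PosDef) (hσtr : Matrix.trace σ = 1)
    (s : ℝ) (hs : 0 < s) (hbound : (σ - s • (1 : Matrix n n ℂ)).PosSemidef) :
    relEnt ρ σ ≤ -Real.log s :=
  relEnt_le_neg_log_smallest_eigenvalue_general ρ σ hρ hρtr s hs hbound
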